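/- arXiv:1805.08125 — 6 statements merged into one kernel-verified Lean document; each statement's English description precedes it below -/
import Mathlib

section
/- For the Multiplicative Weights algorithm with K experts, per-round gains gₙⁱ ∈ [0,1], learning rate δ ∈ (0,1), weights initialized to wᵢ₁ = 1 and updated by wⁱₙ₊₁ = wⁱₙ(1 + δ·gⁱₙ), with expected algorithm gain g^alg_n = (Σᵢ wⁱₙ gⁱₙ)/(Σᵢ wⁱₙ): for every expert i, Σₙ₌₁ᴺ g^alg_n ≥ Σₙ₌₁ᴺ gⁱₙ - log(K)/δ - δN. -/
/-! Track the potential `Wₙ = ∑ᵢ wⁱₙ`. Each round multiplies it by `1 + δ g^alg_n`, so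
`log W_N = log K + ∑ₙ log (1 + δ g^alg_n) ≤ log K + δ ∑ₙ g^alg_n`. On the other hand `W_N` dominates
the single weight `wⁱ_N = ∏ₙ (1 + δ gⁱₙ)`, whose logarithm is at least
`∑ₙ (δ gⁱₙ - δ² (gⁱₙ)²) ≥ δ ∑ₙ gⁱₙ - δ² N`. Comparing the two bounds and dividing by `δ` gives the
regret bound. -/

open Finset Real

lemma eq_mul_prod_range_of_succ {M : Type*} [CommMonoid M] {a x : ℕ → M}
    (ha : ∀ n, a (n + 1) = a n * x n) (N : ℕ) : a N = a 0 * ∏ n ∈ range N, x n := by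
  induction N with
  | zero => simp
  | succ N ih => rw [ha, ih, prod_range_succ, mul_assoc]

lemma Real.sub_sq_le_log_one_add {x : ℝ} (hx : 0 ≤ x) : x - x ^ 2 ≤ log (1 + x) := by
  refine le_trans ?_ (le_log_one_add_of_nonneg hx)
  rw [le_div_iff₀ (by linarith)]
  nlinarith [sq_nonneg x, mul_nonneg hx (sq_nonneg x)]

lemma Real.log_prod_one_add_le_sum {α : Type*} {s : Finset α} {x : α → ℝ}
    (hx : ∀ n ∈ s, 0 ≤ x n) : log (∏ n ∈ s, (1 + x n)) ≤ ∑ n ∈ s, x n := by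
  rw [log_prod fun n hn => by linarith [hx n hn]]
  exact sum_le_sum fun n hn => by
    linarith [log_le_sub_one_of_pos (by linarith [hx n hn] : 0 < 1 + x n)]

lemma Real.sum_sub_sq_le_log_prod_one_add {α : Type*} {s : Finset α} {x : α → ℝ}
    (hx : ∀ n ∈ s, 0 ≤ x n) : ∑ n ∈ s, (x n - x n ^ 2) ≤ log (∏ n ∈ s, (1 + x n)) := by
  rw [log_prod fun n hn => by linarith [hx n hn]]
  exact sum_le_sum fun n hn => sub_sq_le_log_one_add (hx n hn)

section MultiplicativeWeights

variable {ι : Type*} {δ : ℝ} {g w : ℕ → ι → ℝ}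

/-- The algorithm's expected gain `g^alg_n` in round `n`. -/
noncomputable def mwGain [Fintype ι] (w g : ℕ → ι → ℝ) (n : ℕ) : ℝ :=
  (∑ j, w n j * g n j) / ∑ j, w n j

lemma weight_eq_prod (hw0 : ∀ i, w 0 i = 1) (hwsucc : ∀ n i, w (n + 1) i = w n i * (1 + δ * g n i))
    (n : ℕ) (i : ι) : w n i = ∏ m ∈ range n, (1 + δ * g m i) := by
  simpa [hw0] using eq_mul_prod_range_of_succ (a := fun n => w n i) (fun n => hwsucc n i) n

lemma weight_pos (hδ : 0 ≤ δ) (hg : ∀ n i, 0 ≤ g n i) (hw0 : ∀ i, w 0 i = 1)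
    (hwsucc : ∀ n i, w (n + 1) i = w n i * (1 + δ * g n i)) (n : ℕ) (i : ι) : 0 < w n i :=
  weight_eq_prod hw0 hwsucc n i ▸ prod_pos fun m _ => by have := hg m i; positivity

lemma log_weight_ge (hδ : 0 ≤ δ) {i : ι} (hg : ∀ n, g n i ∈ Set.Icc (0 : ℝ) 1)
    (hw0 : ∀ i, w 0 i = 1) (hwsucc : ∀ n i, w (n + 1) i = w n i * (1 + δ * g n i)) (N : ℕ) :
    δ * ∑ n ∈ range N, g n i - δ ^ 2 * N ≤ log (w N i) :=
  calc δ * ∑ n ∈ range N, g n i - δ ^ 2 * N = ∑ n ∈ range N, (δ * g n i - δ ^ 2) := by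
        rw [sum_sub_distrib, mul_sum, sum_const, card_range, nsmul_eq_mul, mul_comm]
    _ ≤ ∑ n ∈ range N, (δ * g n i - (δ * g n i) ^ 2) :=
        sum_le_sum fun n _ => sub_le_sub_left (pow_le_pow_left₀ (mul_nonneg hδ (hg n).1)
          (mul_le_of_le_one_right hδ (hg n).2) 2) _
    _ ≤ log (w N i) := weight_eq_prod hw0 hwsucc N i ▸
        sum_sub_sq_le_log_prod_one_add fun n _ => mul_nonneg hδ (hg n).1

variable [Fintype ι]

lemma mwGain_nonneg (hg : ∀ n i, 0 ≤ g n i) (hw : ∀ n i, 0 ≤ w n i) (n : ℕ) :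
    0 ≤ mwGain w g n :=
  div_nonneg (sum_nonneg fun j _ => mul_nonneg (hw n j) (hg n j)) (sum_nonneg fun j _ => hw n j)

lemma sum_weight_succ (hwsucc : ∀ n i, w (n + 1) i = w n i * (1 + δ * g n i)) {n : ℕ}
    (hW : ∑ j, w n j ≠ 0) : ∑ j, w (n + 1) j = (∑ j, w n j) * (1 + δ * mwGain w g n) := by
  rw [mwGain, mul_add, mul_one, ← mul_assoc, mul_comm _ δ, mul_assoc, mul_div_cancel₀ _ hW,
    mul_sum, ← sum_add_distrib]
  exact sum_congr rfl fun j _ => by rw [hwsucc]; ring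

lemma log_sum_weight_le [Nonempty ι] (hδ : 0 ≤ δ) (hg : ∀ n i, 0 ≤ g n i)
    (hw0 : ∀ i, w 0 i = 1) (hwsucc : ∀ n i, w (n + 1) i = w n i * (1 + δ * g n i)) (N : ℕ) :
    log (∑ j, w N j) ≤ log (Fintype.card ι) + δ * ∑ n ∈ range N, mwGain w g n := by
  have hwpos := weight_pos hδ hg hw0 hwsucc
  have hgain : ∀ n, 0 ≤ δ * mwGain w g n :=
    fun n => mul_nonneg hδ (mwGain_nonneg hg (fun n i => (hwpos n i).le) n)
  have hW : ∑ j, w N j = Fintype.card ι * ∏ n ∈ range N, (1 + δ * mwGain w g n) := by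
    simpa [hw0] using eq_mul_prod_range_of_succ (a := fun n => ∑ j, w n j)
      (fun n => sum_weight_succ hwsucc (sum_pos (fun j _ => hwpos n j) univ_nonempty).ne') N
  rw [hW, log_mul (by simp) (prod_pos fun n _ => by linarith [hgain n]).ne', mul_sum]
  gcongr
  exact log_prod_one_add_le_sum fun n _ => hgain n

end MultiplicativeWeights

theorem mw_regret_bound_general
    (K N : ℕ) (δ : ℝ) (hδ0 : 0 < δ)
    (g : ℕ → Fin K → ℝ) (hg : ∀ n i, g n i ∈ Set.Icc (0:ℝ) 1)
    (w : ℕ → Fin K → ℝ)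
    (hw0 : ∀ i, w 0 i = 1)
    (hwsucc : ∀ n i, w (n+1) i = w n i * (1 + δ * g n i))
    (galg : ℕ → ℝ)
    (hgalg : ∀ n, galg n = (∑ i, w n i * g n i) / (∑ i, w n i))
    (i : Fin K) :
    ∑ n ∈ Finset.range N, galg n ≥
      ∑ n ∈ Finset.range N, g n i - Real.log K / δ - δ * N := by
  obtain rfl : galg = mwGain w g := funext hgalg
  have : Nonempty (Fin K) := ⟨i⟩
  have hg0 : ∀ n j, 0 ≤ g n j := fun n j => (hg n j).1
  have hlower := log_weight_ge hδ0.le (hg · i) hw0 hwsucc N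
  have hupper := log_sum_weight_le hδ0.le hg0 hw0 hwsucc N
  have hwpos := weight_pos hδ0.le hg0 hw0 hwsucc N
  have hsingle : log (w N i) ≤ log (∑ j, w N j) :=
    log_le_log (hwpos i) (single_le_sum (fun j _ => (hwpos j).le) (mem_univ i))
  rw [Fintype.card_fin] at hupper
  rw [ge_iff_le, ← mul_le_mul_iff_of_pos_left hδ0, mul_sub, mul_sub, mul_div_cancel₀ _ hδ0.ne']
  linarith

/-- Multiplicative Weights regret bound: for every expert `i`,
`Σ g^alg_n ≥ Σ gⁱₙ - log K / δ - δ N`. -/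
theorem mw_regret_bound
    (K N : ℕ) (hK : 0 < K) (δ : ℝ) (hδ0 : 0 < δ) (hδ1 : δ < 1)
    (g : ℕ → Fin K → ℝ) (hg : ∀ n i, g n i ∈ Set.Icc (0:ℝ) 1)
    (w : ℕ → Fin K → ℝ)
    (hw0 : ∀ i, w 0 i = 1)
    (hwsucc : ∀ n i, w (n+1) i = w n i * (1 + δ * g n i))
    (galg : ℕ → ℝ)
    (hgalg : ∀ n, galg n = (∑ i, w n i * g n i) / (∑ i, w n i))
    (i : Fin K) :
    ∑ n ∈ Finset.range N, galg n ≥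
      ∑ n ∈ Finset.range N, g n i - Real.log K / δ - δ * N :=
  mw_regret_bound_general K N δ hδ0 g hg w hw0 hwsucc galg hgalg i
end

section
/- With learning rate δ = √(log(K)/N), the Multiplicative Weights algorithm with K experts and gains in [0,1] satisfies, for every expert i: (1/N)·Σₙ₌₁ᴺ g^alg_n ≥ (1/N)·Σₙ₌₁ᴺ gⁱₙ - 2√(log(K)/N). -/
/-!
The weights are products, `w N i = ∏ₙ (1 + δ gⁱₙ)` and `∑ⱼ w N j = K ∏ₙ (1 + δ g^alg_n)`, and
`w N i ≤ ∑ⱼ w N j`. Taking logarithms, `log (1 + x) ≥ x - x²` on the left and `log (1 + x) ≤ x`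
on the right give `δ (∑ gⁱ - ∑ g^alg) ≤ log K + N δ²`; the tuned `δ` makes `N δ² = log K`.
-/

open Finset Real

section MultiplicativeWeights

variable {K : ℕ} {δ : ℝ} {g w : ℕ → Fin K → ℝ} {galg : ℕ → ℝ}

lemma mw_weight_eq_prod (hw0 : ∀ i, w 0 i = 1)
    (hwsucc : ∀ n i, w (n + 1) i = w n i * (1 + δ * g n i)) (n : ℕ) (i : Fin K) :
    w n i = ∏ m ∈ range n, (1 + δ * g m i) := by
  induction n with
  | zero => simp [hw0]
  | succ n ih => rw [hwsucc, ih, prod_range_succ]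

lemma mw_sum_weights_eq_prod (hw0 : ∀ i, w 0 i = 1)
    (hwsucc : ∀ n i, w (n + 1) i = w n i * (1 + δ * g n i))
    (hgalg : ∀ n, galg n = (∑ i, w n i * g n i) / (∑ i, w n i))
    (hS : ∀ n, ∑ i, w n i ≠ 0) (n : ℕ) :
    ∑ i, w n i = K * ∏ m ∈ range n, (1 + δ * galg m) := by
  induction n with
  | zero => simp [hw0]
  | succ n ih =>
    have hstep : ∑ i, w (n + 1) i = (∑ i, w n i) * (1 + δ * galg n) := by
      have hS := hS n
      rw [hgalg]
      field_simp
      rw [mul_sum, ← sum_add_distrib]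
      exact sum_congr rfl fun i _ => by rw [hwsucc]; ring
    rw [hstep, ih, prod_range_succ, mul_assoc]

lemma mw_mul_regret_le (hδ : 0 ≤ δ) (hg : ∀ n i, g n i ∈ Set.Icc (0 : ℝ) 1)
    (hw0 : ∀ i, w 0 i = 1) (hwsucc : ∀ n i, w (n + 1) i = w n i * (1 + δ * g n i))
    (hgalg : ∀ n, galg n = (∑ i, w n i * g n i) / (∑ i, w n i)) (N : ℕ) (i : Fin K) :
    δ * (∑ n ∈ range N, g n i - ∑ n ∈ range N, galg n) ≤ log K + N * δ ^ 2 := by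
  have hfac : ∀ m j, 0 < 1 + δ * g m j := fun m j => by nlinarith [(hg m j).1]
  have hw : ∀ n j, 0 < w n j := fun n j => by
    rw [mw_weight_eq_prod hw0 hwsucc]; exact prod_pos fun m _ => hfac m j
  have hS : ∀ n, 0 < ∑ j, w n j := fun n => sum_pos (fun j _ => hw n j) ⟨i, mem_univ i⟩
  have hgalg_nonneg : ∀ n, 0 ≤ galg n := fun n => by
    rw [hgalg]
    exact div_nonneg (sum_nonneg fun j _ => mul_nonneg (hw n j).le (hg n j).1) (hS n).le
  have hfac' : ∀ m, 0 < 1 + δ * galg m := fun m => by nlinarith [hgalg_nonneg m]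
  have hlog_w : ∑ n ∈ range N, (δ * g n i - δ ^ 2) ≤ log (w N i) := by
    rw [mw_weight_eq_prod hw0 hwsucc, log_prod fun m _ => (hfac m i).ne']
    refine sum_le_sum fun n _ => ?_
    have hx : 0 ≤ δ * g n i := mul_nonneg hδ (hg n i).1
    have hsq : (δ * g n i) ^ 2 ≤ δ ^ 2 := by
      rw [mul_pow]
      exact mul_le_of_le_one_right (sq_nonneg δ) (pow_le_one₀ (hg n i).1 (hg n i).2)
    linarith [sub_sq_le_log_one_add hx]
  have hlog_S : log (∑ j, w N j) ≤ log K + ∑ n ∈ range N, δ * galg n := by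
    rw [mw_sum_weights_eq_prod hw0 hwsucc hgalg (fun n => (hS n).ne'),
      log_mul (Nat.cast_ne_zero.mpr i.pos.ne') (prod_pos fun m _ => hfac' m).ne',
      log_prod fun m _ => (hfac' m).ne']
    gcongr with n
    linarith [log_le_sub_one_of_pos (hfac' n)]
  have hw_le_S : log (w N i) ≤ log (∑ j, w N j) :=
    log_le_log (hw N i) (single_le_sum (fun j _ => (hw N j).le) (mem_univ i))
  rw [sum_sub_distrib, sum_const, card_range, nsmul_eq_mul, ← mul_sum] at hlog_w
  rw [← mul_sum] at hlog_S
  linarith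

end MultiplicativeWeights

/-- Multiplicative Weights with tuned learning rate `δ = √(log K / N)`:
for every expert `i`, the average gain of the algorithm is within
`2√(log K / N)` of the average gain of expert `i`. -/
theorem mw_regret_bound_tuned
    (K N : ℕ) (hK : 1 < K) (hN : 0 < N) (δ : ℝ)
    (hδ : δ = Real.sqrt (Real.log K / N))
    (g : ℕ → Fin K → ℝ) (hg : ∀ n i, g n i ∈ Set.Icc (0:ℝ) 1)
    (w : ℕ → Fin K → ℝ)
    (hw0 : ∀ i, w 0 i = 1)
    (hwsucc : ∀ n i, w (n+1) i = w n i * (1 + δ * g n i))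
    (galg : ℕ → ℝ)
    (hgalg : ∀ n, galg n = (∑ i, w n i * g n i) / (∑ i, w n i))
    (i : Fin K) :
    (1 / N : ℝ) * ∑ n ∈ Finset.range N, galg n ≥
      (1 / N : ℝ) * ∑ n ∈ Finset.range N, g n i - 2 * Real.sqrt (Real.log K / N) := by
  have hNpos : (0 : ℝ) < N := by exact_mod_cast hN
  have hratio : 0 < log K / N := div_pos (log_pos (by exact_mod_cast hK)) hNpos
  have hδpos : 0 < δ := hδ ▸ sqrt_pos.mpr hratio
  have hδsq : N * δ ^ 2 = log K := by
    rw [hδ, sq_sqrt hratio.le, mul_div_cancel₀ _ hNpos.ne']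
  have hregret := mw_mul_regret_le hδpos.le hg hw0 hwsucc hgalg N i
  have hdiff : ∑ n ∈ range N, g n i - ∑ n ∈ range N, galg n ≤ 2 * δ * N :=
    le_of_mul_le_mul_left (by linarith) hδpos
  have havg :
      (1 / N : ℝ) * ∑ n ∈ range N, g n i - (1 / N : ℝ) * ∑ n ∈ range N, galg n ≤ 2 * δ := by
    rw [← mul_sub, one_div_mul_eq_div, div_le_iff₀ hNpos]
    linarith
  rw [← hδ]
  linarith
end

section
/- (Identical-copies Shapley counting) Consider a cooperative game on M+c players where players 1,…,M are 'originals' and players M+1,…,M+c are exact copies of player i, in the sense that v(S ∪ {j}) = v(S ∪ {i}) whenever j is a copy of i and i ∉ S, and v(S ∪ {j}) = v(S) whenever i ∈ S or some copy of i is in S. Then the Shapley value of player i in the extended game satisfies φ̂(i) ≤ (M/(M+c)) · φ(i), where φ(i) is the Shapley value of i in the original M-player game. -/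
/-!
A copy's marginal contribution is that of `i`, and `i` contributes nothing to a coalition that
already contains a copy. Hence in the Shapley sum of `i` in the extended game only coalitions of
originals survive, and these are exactly the coalitions of the original game. For a coalition of
size `t < M` the Shapley weight on `n` players is `1 / (n * choose (n - 1) t)`, so passing from
`M` to `M + c` players scales it by `M / (M + c)` times `choose (M - 1) t / choose (M + c - 1) t ≤ 1`.
Monotonicity makes the marginal contributions nonnegative, so the bound holds termwise.
-/

/-- The Shapley value of player `m` in the game `v`. -/
noncomputable def shapley {M : ℕ} (v : Finset (Fin M) → ℝ) (m : Fin M) : ℝ :=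
  ∑ T ∈ (Finset.univ.erase m).powerset,
    ((T.card.factorial * (M - T.card - 1).factorial : ℝ) / (M.factorial : ℝ)) *
      (v (insert m T) - v T)

open Finset

noncomputable def shapleyWeight (n t : ℕ) : ℝ :=
  (t.factorial * (n - t - 1).factorial : ℝ) / (n.factorial : ℝ)

theorem shapley_eq_sum_shapleyWeight {M : ℕ} (v : Finset (Fin M) → ℝ) (m : Fin M) :
    shapley v m =
      ∑ T ∈ (univ.erase m).powerset, shapleyWeight M T.card * (v (insert m T) - v T) :=
  rfl

theorem shapleyWeight_eq_inv {n t : ℕ} (ht : t < n) :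
    shapleyWeight n t = ((n : ℝ) * (n - 1).choose t)⁻¹ := by
  have hchoose : ((n - 1).choose t : ℝ) * t.factorial * (n - t - 1).factorial =
      (n - 1).factorial := by
    rw [show n - t - 1 = n - 1 - t by omega]
    exact_mod_cast Nat.choose_mul_factorial_mul_factorial (by omega)
  have hfact : (n : ℝ) * (n - 1).factorial = n.factorial := by
    exact_mod_cast Nat.mul_factorial_pred (by omega)
  have : (0 : ℝ) < (n - 1).choose t := by exact_mod_cast Nat.choose_pos (by omega)
  rw [shapleyWeight, ← hfact, ← hchoose]
  field_simp

theorem shapleyWeight_add_le {M t : ℕ} (c : ℕ) (ht : t < M) :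
    shapleyWeight (M + c) t ≤ (M : ℝ) / (M + c) * shapleyWeight M t := by
  have hchoose_pos : (0 : ℝ) < (M - 1).choose t := by exact_mod_cast Nat.choose_pos (by omega)
  have hM : (0 : ℝ) < M := by exact_mod_cast (show 0 < M by omega)
  have hchoose_le : ((M - 1).choose t : ℝ) ≤ (M + c - 1).choose t := by
    exact_mod_cast Nat.choose_le_choose t (by omega)
  calc shapleyWeight (M + c) t = (((M : ℝ) + c) * (M + c - 1).choose t)⁻¹ := by
        rw [shapleyWeight_eq_inv (by omega), Nat.cast_add]
    _ ≤ (((M : ℝ) + c) * (M - 1).choose t)⁻¹ :=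
        inv_anti₀ (by positivity) (mul_le_mul_of_nonneg_left hchoose_le (by positivity))
    _ = (M : ℝ) / (M + c) * shapleyWeight M t := by
        rw [shapleyWeight_eq_inv ht]
        field_simp

theorem marginal_eq_zero_of_copy_mem {α β : Type*} [DecidableEq α] {v : Finset α → β}
    {p q : α} (hadd : ∀ S, p ∉ S → v (insert q S) = v (insert p S))
    (hnull : ∀ S, p ∈ S → v (insert q S) = v S) {T : Finset α} (hp : p ∉ T) (hq : q ∈ T) :
    v (insert p T) = v T := by
  have hpS : p ∉ T.erase q := fun h => hp (mem_of_mem_erase h)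
  rw [← insert_erase hq, insert_comm, hnull _ (mem_insert_self _ _), hadd _ hpS]

theorem exists_image_castAdd_eq {M c : ℕ} {T : Finset (Fin (M + c))}
    (hT : ∀ b : Fin c, Fin.natAdd M b ∉ T) : ∃ A : Finset (Fin M), A.image (Fin.castAdd c) = T := by
  classical
  refine ⟨T.preimage (Fin.castAdd c) (Fin.castAdd_injective M c).injOn, ?_⟩
  rw [image_preimage, filter_true_of_mem]
  intro j hj
  induction j using Fin.addCases with
  | left a => exact ⟨a, rfl⟩
  | right b => exact absurd hj (hT b)

theorem sum_powerset_erase_castAdd {M c : ℕ} {β : Type*} [AddCommMonoid β]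
    (f : Finset (Fin (M + c)) → β) (i : Fin M)
    (hf : ∀ T ⊆ univ.erase (Fin.castAdd c i), (∃ b : Fin c, Fin.natAdd M b ∈ T) → f T = 0) :
    ∑ T ∈ (univ.erase (Fin.castAdd c i)).powerset, f T =
      ∑ A ∈ (univ.erase i).powerset, f (A.image (Fin.castAdd c)) := by
  have hinj := Fin.castAdd_injective M c
  rw [← sum_image fun A _ B _ h => image_injective hinj h]
  symm
  apply sum_subset
  · intro T hT
    obtain ⟨A, hA, rfl⟩ := mem_image.mp hT
    refine mem_powerset.mpr fun j hj => ?_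
    obtain ⟨a, ha, rfl⟩ := mem_image.mp hj
    exact mem_erase.mpr ⟨fun hai => (mem_erase.mp (mem_powerset.mp hA ha)).1 (hinj hai),
      mem_univ _⟩
  · intro T hT hTA
    refine hf T (mem_powerset.mp hT) (not_forall_not.mp fun hcopy => hTA ?_)
    obtain ⟨A, rfl⟩ := exists_image_castAdd_eq hcopy
    refine mem_image_of_mem _ (mem_powerset.mpr fun a ha => mem_erase.mpr ⟨?_, mem_univ a⟩)
    rintro rfl
    exact (mem_erase.mp (mem_powerset.mp hT (mem_image_of_mem _ ha))).1 rfl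

theorem replicated_shapley_bound_general (M c : ℕ)
    (v : Finset (Fin (M + c)) → ℝ)
    (hmono : ∀ S T, S ⊆ T → v S ≤ v T)
    (i : Fin M)
    (hcopyAdd : ∀ (a : Fin c) (S : Finset (Fin (M + c))),
      Fin.castAdd c i ∉ S →
      v (insert (Fin.natAdd M a) S) = v (insert (Fin.castAdd c i) S))
    (hcopyNull : ∀ (a : Fin c) (S : Finset (Fin (M + c))),
      (Fin.castAdd c i ∈ S ∨ ∃ b : Fin c, Fin.natAdd M b ∈ S) →
      v (insert (Fin.natAdd M a) S) = v S) :
    shapley v (Fin.castAdd c i) ≤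
      ((M : ℝ) / (M + c)) * shapley (fun T => v (T.image (Fin.castAdd c))) i := by
  have hcopy_marginal : ∀ T ⊆ univ.erase (Fin.castAdd c i), (∃ b : Fin c, Fin.natAdd M b ∈ T) →
      shapleyWeight (M + c) T.card * (v (insert (Fin.castAdd c i) T) - v T) = 0 := by
    rintro T hT ⟨b, hb⟩
    have hiT : Fin.castAdd c i ∉ T := fun h => (mem_erase.mp (hT h)).1 rfl
    rw [marginal_eq_zero_of_copy_mem (hcopyAdd b) (fun S hS => hcopyNull b S (Or.inl hS)) hiT hb,
      sub_self, mul_zero]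
  rw [shapley_eq_sum_shapleyWeight, sum_powerset_erase_castAdd _ i hcopy_marginal,
    shapley_eq_sum_shapleyWeight, mul_sum]
  refine sum_le_sum fun A hA => ?_
  have hcard : A.card < M := calc
    A.card ≤ (univ.erase i).card := card_le_card (mem_powerset.mp hA)
    _ < M := by simpa using card_erase_lt_of_mem (mem_univ i)
  rw [image_insert, card_image_of_injective _ (Fin.castAdd_injective M c), ← mul_assoc]
  exact mul_le_mul_of_nonneg_right (shapleyWeight_add_le c hcard)
    (sub_nonneg.mpr (hmono _ _ (subset_insert _ _)))

/-- Identical-copies Shapley counting: if players `M, …, M+c-1` are exact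
copies of original player `i` (copies add the same value as `i` when `i` is
absent and add nothing once `i` or some copy is present), then the Shapley
value of `i` in the extended game on `M + c` players is at most
`M/(M+c)` times its Shapley value in the original `M`-player game. -/
theorem replicated_shapley_bound (M c : ℕ) (hM : 0 < M)
    (v : Finset (Fin (M + c)) → ℝ)
    (hmono : ∀ S T, S ⊆ T → v S ≤ v T)
    (hnonneg : ∀ S, 0 ≤ v S)
    (i : Fin M)
    (hcopyAdd : ∀ (a : Fin c) (S : Finset (Fin (M + c))),
      Fin.castAdd c i ∉ S →
      v (insert (Fin.natAdd M a) S) = v (insert (Fin.castAdd c i) S))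
    (hcopyNull : ∀ (a : Fin c) (S : Finset (Fin (M + c))),
      (Fin.castAdd c i ∈ S ∨ ∃ b : Fin c, Fin.natAdd M b ∈ S) →
      v (insert (Fin.natAdd M a) S) = v S) :
    shapley v (Fin.castAdd c i) ≤
      ((M : ℝ) / (M + c)) * shapley (fun T => v (T.image (Fin.castAdd c))) i :=
  replicated_shapley_bound_general M c v hmono i hcopyAdd hcopyNull
end

section
/- (Incompatibility of balance and replication-robustness under anonymity) There is no anonymous revenue-division function ψ on cooperative games that simultaneously satisfies: (i) balance, Σₘ ψ(m) = 1; (ii) symmetry, players with identical marginal contributions receive equal shares; and (iii) robustness to replication, i.e., the total share of a seller never strictly increases when the seller adds exact copies of its own feature. Concretely: with two players A, B selling identical features, symmetry and balance force ψ(A) = ψ(B) = 1/2; if A adds one copy A' (indistinguishable from a third identical seller), symmetry and balance force ψ(A) = ψ(B) = ψ(A') = 1/3, so A's total share becomes 2/3 > 1/2, violating robustness. -/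
/-!
Under the game `v S = 1` for every nonempty coalition `S`, all players are interchangeable, so
symmetry and balance force every share to be `1/n`. With two sellers `A` holds `1/2`; once `A` adds a
copy of its feature there are three interchangeable sellers, and `A` with its copy holds `2/3 > 1/2`.
-/

open Finset

/-- The game of `n` sellers of one identical feature: a coalition has full value as soon as it holds one copy. -/
def nonemptyGame (n : ℕ) (S : Finset (Fin n)) : ℝ := if S.Nonempty then 1 else 0

lemma nonemptyGame_insert (n : ℕ) (a : Fin n) (S : Finset (Fin n)) :
    nonemptyGame n (insert a S) = 1 :=
  if_pos (insert_nonempty a S)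

lemma eq_inv_card_of_sum_eq_one {ι : Type*} [Fintype ι] {f : ι → ℝ}
    (hf : ∀ a b, f a = f b) (hsum : ∑ i, f i = 1) (a : ι) :
    f a = (Fintype.card ι : ℝ)⁻¹ := by
  have : (Fintype.card ι : ℝ) * f a = 1 := by
    rw [← hsum, ← nsmul_eq_mul, ← card_univ, ← sum_const]
    exact sum_congr rfl fun b _ => hf a b
  exact eq_inv_of_mul_eq_one_right this

lemma share_nonemptyGame
    (ψ : (n : ℕ) → (Finset (Fin n) → ℝ) → Fin n → ℝ)
    (balance : ∀ n, 0 < n → ∀ v : Finset (Fin n) → ℝ, ∑ m, ψ n v m = 1)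
    (symm : ∀ n (v : Finset (Fin n) → ℝ) (a b : Fin n),
      (∀ S : Finset (Fin n), a ∉ S → b ∉ S → v (insert a S) = v (insert b S)) →
      ψ n v a = ψ n v b)
    {n : ℕ} (hn : 0 < n) (a : Fin n) :
    ψ n (nonemptyGame n) a = (n : ℝ)⁻¹ := by
  have hinterchangeable : ∀ a b, ψ n (nonemptyGame n) a = ψ n (nonemptyGame n) b :=
    fun a b => symm n _ a b fun S _ _ => by rw [nonemptyGame_insert, nonemptyGame_insert]
  simpa using eq_inv_card_of_sum_eq_one hinterchangeable (balance n hn _) a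

/-- No anonymous revenue-division scheme can simultaneously satisfy balance,
symmetry and robustness to replication: in the two-player game with identical
features each player gets `1/2`, but after player `A` adds one identical copy,
symmetry and balance force each of the three identical players to get `1/3`,
so `A`'s total share `2/3` strictly exceeds `1/2`. -/
theorem no_anonymous_balanced_robust_division
    (ψ : (n : ℕ) → (Finset (Fin n) → ℝ) → Fin n → ℝ)
    (balance : ∀ n, 0 < n → ∀ v : Finset (Fin n) → ℝ, ∑ m, ψ n v m = 1)
    (symm : ∀ n (v : Finset (Fin n) → ℝ) (a b : Fin n),
      (∀ S : Finset (Fin n), a ∉ S → b ∉ S → v (insert a S) = v (insert b S)) →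
      ψ n v a = ψ n v b) :
    ¬ (ψ 3 (fun S => if S.Nonempty then 1 else 0) 0
        + ψ 3 (fun S => if S.Nonempty then 1 else 0) 2
        ≤ ψ 2 (fun S => if S.Nonempty then 1 else 0) 0) := by
  change ¬ (ψ 3 (nonemptyGame 3) 0 + ψ 3 (nonemptyGame 3) 2 ≤ ψ 2 (nonemptyGame 2) 0)
  rw [share_nonemptyGame ψ balance symm three_pos, share_nonemptyGame ψ balance symm three_pos,
    share_nonemptyGame ψ balance symm two_pos]
  norm_num
end

section
/- If f : ℝ≥0 → ℝ≥0 is differentiable and satisfies (c+1)·f(x+c) ≤ f(x) for all real c > 0 and all x ≥ 0, then f'(x) ≤ −f(x) for all x ≥ 0, and consequently f(x) ≤ f(0)·e^{−x} for all x ≥ 0. -/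
open Set Filter Topology Real

/-- Rearranged, the hypothesis bounds the right difference quotients `slope f x y` by `-f y`,
which tends to `-f x`. -/
theorem le_neg_of_hasDerivWithinAt_Ioi {f : ℝ → ℝ} {f' x : ℝ} (hf : HasDerivWithinAt f f' (Ioi x) x)
    (hrob : ∀ᶠ y in 𝓝[>] x, (y - x + 1) * f y ≤ f x) : f' ≤ -f x := by
  have hslope : Tendsto (slope f x) (𝓝[>] x) (𝓝 f') :=
    (hasDerivWithinAt_iff_tendsto_slope' self_notMem_Ioi).mp hf
  have hcont : Tendsto (fun y => -f y) (𝓝[>] x) (𝓝 (-f x)) :=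
    hf.continuousWithinAt.tendsto.neg
  refine le_of_tendsto_of_tendsto hslope hcont ?_
  filter_upwards [hrob, self_mem_nhdsWithin] with y hy (hxy : x < y)
  rw [slope_def_field, div_le_iff₀ (sub_pos.mpr hxy)]
  linarith

theorem antitoneOn_mul_exp_of_deriv_le_neg {f : ℝ → ℝ} {a : ℝ} (hf : Differentiable ℝ f)
    (hderiv : ∀ x, a < x → deriv f x ≤ -f x) : AntitoneOn (fun x => f x * exp x) (Ici a) := by
  have hg : ∀ x, HasDerivAt (fun x => f x * exp x) ((deriv f x + f x) * exp x) x := fun x => by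
    rw [add_mul]; exact (hf x).hasDerivAt.mul (hasDerivAt_exp x)
  refine antitoneOn_of_deriv_nonpos (convex_Ici a) (hf.continuous.mul continuous_exp).continuousOn
    (fun x _ => (hg x).differentiableAt.differentiableWithinAt) fun x hx => ?_
  rw [interior_Ici] at hx
  rw [(hg x).deriv]
  exact mul_nonpos_of_nonpos_of_nonneg (by linarith [hderiv x hx]) (exp_pos x).le

theorem le_mul_exp_neg_of_deriv_le_neg {f : ℝ → ℝ} (hf : Differentiable ℝ f)
    (hderiv : ∀ x, 0 < x → deriv f x ≤ -f x) {x : ℝ} (hx : 0 ≤ x) : f x ≤ f 0 * exp (-x) := by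
  have h := antitoneOn_mul_exp_of_deriv_le_neg hf hderiv self_mem_Ici (mem_Ici.mpr hx) hx
  simp only [exp_zero, mul_one] at h
  rw [exp_neg, ← div_eq_mul_inv, le_div_iff₀ (exp_pos x)]
  exact h

theorem penalty_decay_general (f : ℝ → ℝ) (hdiff : Differentiable ℝ f)
    (hrob : ∀ c : ℝ, 0 < c → ∀ x : ℝ, 0 ≤ x → (c + 1) * f (x + c) ≤ f x) :
    (∀ x, 0 ≤ x → deriv f x ≤ -f x) ∧
    (∀ x, 0 ≤ x → f x ≤ f 0 * Real.exp (-x)) := by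
  have hderiv : ∀ x, 0 ≤ x → deriv f x ≤ -f x := fun x hx =>
    le_neg_of_hasDerivWithinAt_Ioi (hdiff x).hasDerivAt.hasDerivWithinAt <| by
      filter_upwards [self_mem_nhdsWithin] with y (hxy : x < y)
      simpa using hrob (y - x) (sub_pos.mpr hxy) x hx
  exact ⟨hderiv, fun x => le_mul_exp_neg_of_deriv_le_neg hdiff fun y hy => hderiv y hy.le⟩

/-- If a differentiable nonnegative penalty `f` satisfies the relaxed
robustness condition `(c+1) f(x+c) ≤ f(x)` for all real `c > 0` and `x ≥ 0`,
then `f'(x) ≤ −f(x)` on `x ≥ 0`, and consequently `f(x) ≤ f(0) e^{−x}`. -/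
theorem penalty_decay (f : ℝ → ℝ) (hdiff : Differentiable ℝ f)
    (hf : ∀ x, 0 ≤ x → 0 ≤ f x)
    (hrob : ∀ c : ℝ, 0 < c → ∀ x : ℝ, 0 ≤ x → (c + 1) * f (x + c) ≤ f x) :
    (∀ x, 0 ≤ x → deriv f x ≤ -f x) ∧
    (∀ x, 0 ≤ x → f x ≤ f 0 * Real.exp (-x)) :=
  penalty_decay_general f hdiff hrob
end

section
/- Let ψ̂ approximate the Shapley vector φ with ‖ψ̂ − φ‖_∞ < ε/3 (guaranteed with probability 1−δ when K ≥ M log(2/δ)/(2(ε/3)²)), and define ψ(m) = ψ̂(m)·exp(−λ·Σ_{j≠m} SM(X_m, X_j)) with λ = log 2, where SM is a similarity metric with SM(X,X) = 1 and values in [0,1]. Suppose seller m makes c_m−1 extra copies of its feature and the game is invariant to replication. Then the total allocation to seller m after replication satisfies ψ⁺(m) ≤ ψ(m) + ε. -/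
/-!
Replicating a feature `c` times splits its Shapley value `φ` among the copies, while each copy
acquires similarity at least `c - 1` with the other copies, so its weight carries the extra factor
`2 ^ -(c - 1)`. Since `c ≤ 2 ^ (c - 1)`, the copies together receive at most
`(φ + ε/3) · exp (-(log 2) s)`, and `φ ≤ ψ̂ + ε/3` finishes the estimate.
-/

open Real

lemma natCast_mul_exp_neg_log_two_mul_le_one (n : ℕ) :
    (n : ℝ) * exp (-(log 2) * ((n : ℝ) - 1)) ≤ 1 := by
  cases n with
  | zero => simp
  | succ k =>
    have hpow : ((k + 1 : ℕ) : ℝ) ≤ 2 ^ k := by exact_mod_cast Nat.lt_two_pow_self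
    have hexp : exp (-(log 2) * (((k + 1 : ℕ) : ℝ) - 1)) = (2 ^ k)⁻¹ := by
      rw [Nat.cast_succ, add_sub_cancel_right, neg_mul, exp_neg, mul_comm, exp_nat_mul,
        exp_log two_pos]
    rw [hexp, mul_inv_le_iff₀ (by positivity), one_mul]
    exact hpow

lemma sum_mul_exp_neg_le {ι : Type*} [Fintype ι] {a b : ι → ℝ} {A B lam : ℝ}
    (hlam : 0 ≤ lam) (hA : 0 ≤ A) (ha : ∀ i, a i ≤ A) (hb : ∀ i, B ≤ b i) :
    ∑ i, a i * exp (-lam * b i) ≤ Fintype.card ι * A * exp (-lam * B) := by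
  have hterm : ∀ i, a i * exp (-lam * b i) ≤ A * exp (-lam * B) := fun i =>
    calc a i * exp (-lam * b i) ≤ A * exp (-lam * b i) := by gcongr; exact ha i
      _ ≤ A * exp (-lam * B) :=
        mul_le_mul_of_nonneg_left (exp_le_exp.mpr (by nlinarith [hb i])) hA
  calc ∑ i, a i * exp (-lam * b i) ≤ ∑ _i : ι, A * exp (-lam * B) :=
        Finset.sum_le_sum fun i _ => hterm i
    _ = Fintype.card ι * A * exp (-lam * B) := by simp [mul_assoc]

lemma natCast_mul_div_add_mul_exp_neg_log_two_le {c : ℕ} (hc : 1 ≤ c) {x y : ℝ} (hx : 0 ≤ x) (hy : 0 ≤ y)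
    (s : ℝ) :
    c * (x / c + y) * exp (-(log 2) * (((c : ℝ) - 1) + s)) ≤ (x + y) * exp (-(log 2) * s) := by
  have hc' : (1 : ℝ) ≤ c := by exact_mod_cast hc
  set t := exp (-(log 2) * ((c : ℝ) - 1))
  have ht : t ≤ 1 := exp_le_one_iff.mpr (by nlinarith [log_pos one_lt_two])
  have hct : c * t ≤ 1 := natCast_mul_exp_neg_log_two_mul_le_one c
  have hsplit : c * (x / c + y) * exp (-(log 2) * (((c : ℝ) - 1) + s)) =
      (x * t + (c * t) * y) * exp (-(log 2) * s) := by
    rw [mul_add (-(log 2)), exp_add, mul_add, mul_div_cancel₀ x (by positivity)]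
    ring
  rw [hsplit]
  gcongr
  · exact mul_le_of_le_one_right hx ht
  · exact mul_le_of_le_one_left hy hct

theorem robust_shapley_replication_bound_general
    (c : ℕ) (hc : 1 ≤ c) (ε φm s ψhat : ℝ)
    (hε : 0 < ε) (hφ0 : 0 ≤ φm) (hs : 0 ≤ s)
    (happrox : |ψhat - φm| < ε / 3)
    (ψhatPlus simPlus : Fin c → ℝ)
    (hψplus : ∀ i, ψhatPlus i ≤ φm / c + ε / 3)
    (hsim : ∀ i, ((c : ℝ) - 1) + s ≤ simPlus i) :
    ∑ i, ψhatPlus i * Real.exp (-(Real.log 2) * simPlus i) ≤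
      ψhat * Real.exp (-(Real.log 2) * s) + ε := by
  have hE : exp (-(log 2) * s) ≤ 1 := exp_le_one_iff.mpr (by nlinarith [log_pos one_lt_two])
  have hφ : φm + ε / 3 ≤ ψhat + 2 * ε / 3 := by linarith [(abs_lt.mp happrox).1]
  calc ∑ i, ψhatPlus i * exp (-(log 2) * simPlus i)
      ≤ Fintype.card (Fin c) * (φm / c + ε / 3) * exp (-(log 2) * (((c : ℝ) - 1) + s)) :=
        sum_mul_exp_neg_le (log_pos one_lt_two).le (by positivity) hψplus hsim
    _ ≤ (φm + ε / 3) * exp (-(log 2) * s) := by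
        rw [Fintype.card_fin]
        exact natCast_mul_div_add_mul_exp_neg_log_two_le hc hφ0 (by positivity) s
    _ ≤ (ψhat + 2 * ε / 3) * exp (-(log 2) * s) := by gcongr
    _ ≤ ψhat * exp (-(log 2) * s) + ε := by
        nlinarith [mul_le_mul_of_nonneg_left hE (by positivity : (0 : ℝ) ≤ 2 * ε / 3)]

/-- Robustness to replication of the exponentially down-weighted Shapley
approximation (λ = log 2): if `ψ̂` approximates the true Shapley value `φ(m)`
within `ε/3`, each of the `c` copies of feature `m` has approximate Shapley
value at most `φ(m)/c + ε/3` and cumulative similarity at least `(c−1) + s`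
(where `s` is the original cumulative similarity), then the total allocation
to seller `m` after replication is at most its original allocation plus `ε`. -/
theorem robust_shapley_replication_bound
    (c : ℕ) (hc : 1 ≤ c) (ε φm s ψhat : ℝ)
    (hε : 0 < ε) (hφ0 : 0 ≤ φm) (hφ1 : φm ≤ 1) (hs : 0 ≤ s)
    (happrox : |ψhat - φm| < ε / 3)
    (ψhatPlus simPlus : Fin c → ℝ)
    (hψplus0 : ∀ i, 0 ≤ ψhatPlus i)
    (hψplus : ∀ i, ψhatPlus i ≤ φm / c + ε / 3)
    (hsim : ∀ i, ((c : ℝ) - 1) + s ≤ simPlus i) :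
    ∑ i, ψhatPlus i * Real.exp (-(Real.log 2) * simPlus i) ≤
      ψhat * Real.exp (-(Real.log 2) * s) + ε :=
  robust_shapley_replication_bound_general c hc ε φm s ψhat hε hφ0 hs happrox ψhatPlus simPlus
    hψplus hsim
end
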